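/- arXiv:math/0610516 — 2 statements merged into one kernel-verified Lean document; each statement's English description precedes it below -/
import Mathlib

section
/- Let C be a Brill–Noether general curve of genus g over ℂ, and E a semi-stable rank 2 vector bundle on C with det E = K_C. Then h⁰(E) ≤ g/2 + 2. -/
open Module TensorProduct

/-- An abstraction of a smooth projective curve over `ℂ` together with its line bundles,
their spaces of global sections (realised as subspaces of a common space of rational
sections, with a bilinear multiplication), degrees, the canonical bundle and the genus.
The axioms record standard facts: Riemann–Roch, Serre duality conventions, `h⁰(K) = g`,
`deg K = 2g − 2`, vanishing of `h⁰` in negative degree, and additivity of degrees. -/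
structure AlgCurve where
  /-- the ambient space of (rational) sections -/
  Sections : Type
  [instAdd : AddCommGroup Sections]
  [instMod : Module ℂ Sections]
  /-- the set of (isomorphism classes of) line bundles on the curve -/
  LineBundle : Type
  tensor : LineBundle → LineBundle → LineBundle
  inv : LineBundle → LineBundle
  trivialLB : LineBundle
  /-- the canonical bundle `K_C` -/
  K : LineBundle
  genus : ℕ
  deg : LineBundle → ℤ
  /-- the space of global sections of a line bundle -/
  H0 : LineBundle → Submodule ℂ Sections
  /-- multiplication of sections -/
  mul : Sections →ₗ[ℂ] Sections →ₗ[ℂ] Sections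
  mul_comm' : ∀ x y, mul x y = mul y x
  mul_mem' : ∀ {L L' : LineBundle} {x y : Sections},
    x ∈ H0 L → y ∈ H0 L' → mul x y ∈ H0 (tensor L L')
  finiteH0 : ∀ L, FiniteDimensional ℂ (H0 L)
  tensor_comm : ∀ L M, tensor L M = tensor M L
  tensor_assoc : ∀ L M N, tensor (tensor L M) N = tensor L (tensor M N)
  tensor_trivial : ∀ L, tensor L trivialLB = L
  tensor_inv : ∀ L, tensor L (inv L) = trivialLB
  deg_tensor : ∀ L M, deg (tensor L M) = deg L + deg M
  deg_K : deg K = 2 * (genus : ℤ) - 2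
  h0_K : finrank ℂ (H0 K) = genus
  riemannRoch : ∀ L, (finrank ℂ (H0 L) : ℤ) - finrank ℂ (H0 (tensor K (inv L))) =
    deg L + 1 - genus
  h0_eq_zero_of_deg_neg : ∀ L, deg L < 0 → finrank ℂ (H0 L) = 0

attribute [instance] AlgCurve.instAdd AlgCurve.instMod

namespace AlgCurve

variable (C : AlgCurve)

/-- `h⁰(L)`, the dimension of the space of global sections. -/
noncomputable def h0 (L : C.LineBundle) : ℕ := finrank ℂ (C.H0 L)

/-- The multiplication map `H⁰(L) ⊗ H⁰(L') → H⁰(L ⊗ L')` on global sections. -/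
noncomputable def mulMap (L L' : C.LineBundle) :
    (C.H0 L) ⊗[ℂ] (C.H0 L') →ₗ[ℂ] C.H0 (C.tensor L L') :=
  TensorProduct.lift
    (LinearMap.mk₂ ℂ
      (fun x y => (⟨C.mul x y, C.mul_mem' x.2 y.2⟩ : C.H0 (C.tensor L L')))
      (fun x x' y => by ext; simp)
      (fun c x y => by ext; simp)
      (fun x y y' => by ext; simp)
      (fun c x y => by ext; simp))

/-- `C` is Brill–Noether general: for every line bundle `M` the multiplication map
`H⁰(M) ⊗ H⁰(K ⊗ M⁻¹) → H⁰(K)` is injective. -/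
def BrillNoetherGeneral : Prop :=
  ∀ M : C.LineBundle, Function.Injective (C.mulMap M (C.tensor C.K (C.inv M)))

end AlgCurve

/-- An abstraction of a rank 2 vector bundle `E` on the curve `C`: its space of global
sections, its determinant, and the predicate "is a sub-line bundle of `E`".  The axioms
record standard facts: `E` has sub-line bundles; for a sub-line bundle `L` the exact
sequence `0 → L → E → det E ⊗ L⁻¹ → 0` gives `h⁰(E) ≤ h⁰(L) + h⁰(det E ⊗ L⁻¹)`;
Nagata's theorem `deg E − 2·max deg L ≤ g`; the numerology of `Sym²E`
(`rank 3`, `deg = 3 deg E`, Riemann–Roch); Serre duality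
`h¹(Sym²E) = h⁰(End₀ E)` when `det E = K`; and that a stable bundle is simple, so
`h⁰(End₀ E) = 0`. -/
structure RankTwoBundle (C : AlgCurve) where
  /-- the space of global sections of `E` -/
  H0E : Type
  [instAddE : AddCommGroup H0E]
  [instModE : Module ℂ H0E]
  finiteH0E : FiniteDimensional ℂ H0E
  /-- the determinant line bundle `det E` -/
  det : C.LineBundle
  /-- `L` is a sub-line bundle of `E` -/
  IsSubLineBundle : C.LineBundle → Prop
  exists_sub : ∃ L, IsSubLineBundle L
  h0_le : ∀ L, IsSubLineBundle L →
    Module.finrank ℂ H0E ≤ C.h0 L + C.h0 (C.tensor det (C.inv L))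
  nagata : ∃ L, IsSubLineBundle L ∧ C.deg det - 2 * C.deg L ≤ (C.genus : ℤ)
  /-- `h⁰(Sym²E)` -/
  h0Sym2 : ℕ
  /-- `h¹(Sym²E)` -/
  h1Sym2 : ℕ
  /-- `h⁰(End₀ E)`, the trace-zero endomorphisms -/
  h0End0 : ℕ
  riemannRochSym2 : (h0Sym2 : ℤ) - h1Sym2 = 3 * C.deg det + 3 * (1 - (C.genus : ℤ))
  serreSym2 : det = C.K → h1Sym2 = h0End0
  stable_simple : (∀ L, IsSubLineBundle L → 2 * C.deg L < C.deg det) → h0End0 = 0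

attribute [instance] RankTwoBundle.instAddE RankTwoBundle.instModE

namespace RankTwoBundle

variable {C : AlgCurve} (E : RankTwoBundle C)

/-- `h⁰(E)`. -/
noncomputable def h0E : ℕ := Module.finrank ℂ E.H0E

/-- `E` is semi-stable: every sub-line bundle `L ⊆ E` has `deg L ≤ (deg E)/2`. -/
def Semistable : Prop := ∀ L, E.IsSubLineBundle L → 2 * C.deg L ≤ C.deg E.det

/-- `E` is stable: every sub-line bundle `L ⊆ E` has `deg L < (deg E)/2`. -/
def Stable : Prop := ∀ L, E.IsSubLineBundle L → 2 * C.deg L < C.deg E.det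

end RankTwoBundle

/-- **Lemma 2.** Let `C` be a Brill–Noether general curve of genus `g` and `E` a
semi-stable rank 2 vector bundle on `C` with `det E = K_C`.  Then `h⁰(E) ≤ g/2 + 2`
(i.e. `2·h⁰(E) ≤ g + 4`). -/
theorem stmt10 (C : AlgCurve) (hBN : C.BrillNoetherGeneral)
    (E : RankTwoBundle C) (hss : E.Semistable) (hdet : E.det = C.K) :
    2 * E.h0E ≤ C.genus + 4 := by
  obtain ⟨L, hL, hnag⟩ := E.nagata
  set g := C.genus with hg
  set M := C.tensor C.K (C.inv L) with hM
  set a := C.h0 L with ha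
  set b := C.h0 M with hb
  -- the key equality L ⊗ (K ⊗ L⁻¹) = K
  have hKeq : C.tensor L M = C.K := by
    rw [hM, C.tensor_comm, C.tensor_assoc, C.tensor_comm (C.inv L) L, C.tensor_inv,
      C.tensor_trivial]
  -- Brill–Noether: a * b ≤ g
  haveI := C.finiteH0 L
  haveI := C.finiteH0 M
  haveI := C.finiteH0 (C.tensor L M)
  have hab : a * b ≤ g := by
    have hinj := hBN L
    have hle := LinearMap.finrank_le_finrank_of_injective hinj
    rw [Module.finrank_tensorProduct] at hle
    have : Module.finrank ℂ (C.H0 (C.tensor L M)) = g := by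
      rw [hKeq, C.h0_K]
    rw [this] at hle
    exact hle
  -- Riemann–Roch for L
  have hRR : (a : ℤ) - b = C.deg L + 1 - g := C.riemannRoch L
  -- degree bounds from Nagata and semistability
  have hdegK : C.deg E.det = 2 * (g : ℤ) - 2 := by rw [hdet, C.deg_K]
  have hnag' : (g : ℤ) - 2 ≤ 2 * C.deg L := by
    rw [hdegK] at hnag; linarith
  have hss' : 2 * C.deg L ≤ 2 * (g : ℤ) - 2 := by
    have := hss L hL; rwa [hdegK] at this
  have hba : a ≤ b := by
    have : (a : ℤ) ≤ b := by linarith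
    exact_mod_cast this
  -- h⁰(E) ≤ a + b
  have hE : E.h0E ≤ a + b := by
    have := E.h0_le L hL
    rw [hdet] at this
    exact this
  -- conclude
  rcases le_or_gt 2 a with h2 | h2
  · have h2b : 2 ≤ b := le_trans h2 hba
    have : 2 * (a + b) ≤ g + 4 := by nlinarith
    omega
  · -- a ≤ 1
    have ha1 : a ≤ 1 := by omega
    have : 2 * ((a : ℤ) + b) ≤ g + 4 := by linarith
    have : 2 * (a + b) ≤ g + 4 := by exact_mod_cast this
    omega
end

section
/- With notation as in Beauville's construction: let S be a K3 surface with Pic(S) = ℤ[H], (H²) = 4s − 2 for an integer s ≥ 5, C ∈ |H| a general curve (of genus g = 2s), and E the restriction to C of the Lazarsfeld bundle associated to a line bundle L on C with h⁰(L) = 2, deg L = s + 1. Then every sub-line bundle M of E satisfies: either (h⁰(M) = 2 and deg M = s + 1), or (h⁰(M) ≤ 1 and deg M ≤ s). -/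
open Module TensorProduct

/-- **Lemma 3 (Beauville's construction).**  Let `C` be a Brill–Noether general curve of
genus `g = 2s` (`s ≥ 5`), general in its linear system on a K3 surface with cyclic Picard
group, and let `E` be the restriction to `C` of a Lazarsfeld bundle: a rank 2 bundle with
`det E = K_C`, `h⁰(E) = s + 2`, such that every sub-line bundle `M ⊆ E` admits an
injection `M ↪ K_C ⊗ L⁻¹` for each of the (at least two) line bundles `L` with
`h⁰(L) = 2` and `deg L = s + 1`.  Then every sub-line bundle `M` of `E` satisfies:
either `h⁰(M) = 2` and `deg M = s + 1`, or `h⁰(M) ≤ 1` and `deg M ≤ s`. -/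
theorem stmt14 (s : ℕ) (hs : 5 ≤ s) (C : AlgCurve) (hg : C.genus = 2 * s)
    (hBN : C.BrillNoetherGeneral)
    (E : RankTwoBundle C) (hdet : E.det = C.K) (hh0E : E.h0E = s + 2)
    -- there are at least two line bundles in `𝒫 = {L : h⁰(L) = 2, deg L = s + 1}`,
    (hP : ∃ L₁ L₂ : C.LineBundle, L₁ ≠ L₂ ∧
      (C.h0 L₁ = 2 ∧ C.deg L₁ = (s : ℤ) + 1) ∧ (C.h0 L₂ = 2 ∧ C.deg L₂ = (s : ℤ) + 1))
    -- each of them is a sub-line bundle of `E` (the exact sequence `0 → L → E → K⊗L⁻¹ → 0`),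
    (hseq : ∀ L : C.LineBundle, C.h0 L = 2 → C.deg L = (s : ℤ) + 1 →
      E.IsSubLineBundle L)
    -- and every sub-line bundle `M ⊆ E` injects into `K ⊗ L⁻¹` for every `L ∈ 𝒫`:
    -- `K ⊗ L⁻¹ = M(A)` for some effective divisor `A`, strictly effective unless equality
    (hinj : ∀ M : C.LineBundle, E.IsSubLineBundle M →
      ∀ L : C.LineBundle, C.h0 L = 2 → C.deg L = (s : ℤ) + 1 →
        ∃ A : C.LineBundle, 0 ≤ C.deg A ∧
          C.tensor M A = C.tensor C.K (C.inv L) ∧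
          (C.deg A = 0 → M = C.tensor C.K (C.inv L))) :
    ∀ M : C.LineBundle, E.IsSubLineBundle M →
      (C.h0 M = 2 ∧ C.deg M = (s : ℤ) + 1) ∨
      (C.h0 M ≤ 1 ∧ C.deg M ≤ (s : ℤ)) := by
  intro M hM
  obtain ⟨L₁, L₂, hne, ⟨h01, hd1⟩, ⟨h02, hd2⟩⟩ := hP
  -- basic facts about degrees
  have hdegtriv : C.deg C.trivialLB = 0 := by
    have h := C.deg_tensor C.trivialLB C.trivialLB
    rw [C.tensor_trivial] at h; linarith
  have hdeginv : ∀ L, C.deg (C.inv L) = - C.deg L := by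
    intro L
    have h := C.deg_tensor L (C.inv L)
    rw [C.tensor_inv] at h; linarith
  -- cancellation for tensor
  have hcancel : ∀ A B B' : C.LineBundle, C.tensor A B = C.tensor A B' → B = B' := by
    intro A B B' h
    have h2 : C.tensor (C.inv A) (C.tensor A B) = C.tensor (C.inv A) (C.tensor A B') := by
      rw [h]
    rw [← C.tensor_assoc, ← C.tensor_assoc, C.tensor_comm (C.inv A) A, C.tensor_inv,
      C.tensor_comm C.trivialLB B, C.tensor_trivial, C.tensor_comm C.trivialLB B',
      C.tensor_trivial] at h2
    exact h2
  set a : ℤ := (C.h0 M : ℤ) with ha_def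
  set b : ℤ := (C.h0 (C.tensor C.K (C.inv M)) : ℤ) with hb_def
  set d : ℤ := C.deg M with hd_def
  have ha0 : 0 ≤ a := Int.ofNat_nonneg _
  have hb0 : 0 ≤ b := Int.ofNat_nonneg _
  -- h⁰(E) ≤ h⁰(M) + h⁰(K ⊗ M⁻¹)
  have hab1 : (s : ℤ) + 2 ≤ a + b := by
    have h := E.h0_le M hM
    rw [hdet] at h
    have h2 : (E.h0E : ℤ) ≤ a + b := by
      rw [ha_def, hb_def]
      exact_mod_cast h
    rw [hh0E] at h2
    push_cast at h2
    linarith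
  -- Riemann–Roch
  have hRR : a - b = d + 1 - 2 * (s : ℤ) := by
    have h := C.riemannRoch M
    rw [hg] at h
    unfold AlgCurve.h0 at ha_def hb_def
    rw [← ha_def, ← hb_def, ← hd_def] at h
    push_cast at h
    linarith
  -- Brill–Noether generality: a * b ≤ 2s
  have hKey : C.tensor M (C.tensor C.K (C.inv M)) = C.K := by
    rw [C.tensor_comm C.K (C.inv M), ← C.tensor_assoc, C.tensor_inv,
      C.tensor_comm C.trivialLB C.K, C.tensor_trivial]
  have hmul : a * b ≤ 2 * (s : ℤ) := by
    haveI := C.finiteH0 M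
    haveI := C.finiteH0 (C.tensor C.K (C.inv M))
    haveI := C.finiteH0 (C.tensor M (C.tensor C.K (C.inv M)))
    have hinj' := hBN M
    have h1 := LinearMap.finrank_le_finrank_of_injective hinj'
    rw [finrank_tensorProduct] at h1
    have h2 : finrank ℂ (C.H0 (C.tensor M (C.tensor C.K (C.inv M)))) = 2 * s := by
      rw [hKey, C.h0_K, hg]
    rw [h2] at h1
    unfold AlgCurve.h0 at ha_def hb_def
    rw [ha_def, hb_def]
    exact_mod_cast h1
  -- deg M ≤ 3s - 4 using the two distinct pencils
  obtain ⟨A₁, hA₁0, hA₁e, hA₁eq⟩ := hinj M hM L₁ h01 hd1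
  obtain ⟨A₂, hA₂0, hA₂e, hA₂eq⟩ := hinj M hM L₂ h02 hd2
  have hdA₁ : d + C.deg A₁ = 3 * (s : ℤ) - 3 := by
    have h := congrArg C.deg hA₁e
    rw [C.deg_tensor, C.deg_tensor, C.deg_K, hdeginv, hg, hd1] at h
    push_cast at h
    rw [hd_def]
    linarith
  have hdA₂ : d + C.deg A₂ = 3 * (s : ℤ) - 3 := by
    have h := congrArg C.deg hA₂e
    rw [C.deg_tensor, C.deg_tensor, C.deg_K, hdeginv, hg, hd2] at h
    push_cast at h
    rw [hd_def]
    linarith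
  have hd4 : d ≤ 3 * (s : ℤ) - 4 := by
    by_contra hcon
    push_neg at hcon
    have hz1 : C.deg A₁ = 0 := by omega
    have hz2 : C.deg A₂ = 0 := by omega
    have hM1 := hA₁eq hz1
    have hM2 := hA₂eq hz2
    have hinv : C.inv L₁ = C.inv L₂ := hcancel C.K _ _ (hM1 ▸ hM2)
    apply hne
    have h1 : C.tensor (C.inv L₁) L₁ = C.trivialLB := by
      rw [C.tensor_comm, C.tensor_inv]
    have h2 : C.tensor (C.inv L₂) L₂ = C.trivialLB := by
      rw [C.tensor_comm, C.tensor_inv]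
    rw [hinv] at h1
    exact hcancel (C.inv L₂) L₁ L₂ (h1.trans h2.symm)
  -- now pure arithmetic case analysis
  rcases le_or_gt a 1 with hA | hA
  · -- h⁰(M) ≤ 1, show deg M ≤ s
    right
    constructor
    · have h := hA; rw [ha_def] at h; exact_mod_cast h
    · linarith
  · rcases le_or_gt a 2 with hA2 | hA3
    · -- a = 2
      have ha2 : a = 2 := le_antisymm hA2 hA
      have hbge : (s : ℤ) ≤ b := by linarith
      have hble : b ≤ (s : ℤ) := by nlinarith
      have hbeq : b = (s : ℤ) := le_antisymm hble hbge
      left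
      constructor
      · have h := ha2; rw [ha_def] at h; exact_mod_cast h
      · linarith
    · -- a ≥ 3 : contradiction
      exfalso
      have hb1 : (s : ℤ) + 2 - a ≤ b := by linarith
      have hb2 : a - (s : ℤ) + 3 ≤ b := by linarith
      have hb3 : (3 : ℤ) ≤ b := by omega
      have hs5 : (5 : ℤ) ≤ (s : ℤ) := by exact_mod_cast hs
      nlinarith [mul_nonneg (by linarith : (0:ℤ) ≤ a - 3) (by linarith : (0:ℤ) ≤ b - 3)]
end
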